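/- Let p be a real number with p ≥ 2, d ≥ 1, and let u : ℝ^d → ℝ be twice continuously differentiable with compact support. Then ∫_{ℝ^d} (−Δu(x) + |u(x)|^{p-2}u(x))^2 dx = ∫_{ℝ^d} (Δu(x))^2 dx + ∫_{ℝ^d} |u(x)|^{2p-2} dx + 2(p − 1) ∫_{ℝ^d} |u(x)|^{p-2} |∇u(x)|^2 dx. -/

import Mathlib

/-!
Expanding the square leaves the cross term `-2 ∫ Δu · φ(u)` with `φ(t) = |t|^(p-2) t`.
For `p ≥ 2` the signed power `φ` is `C¹` with `φ'(t) = (p-1)|t|^(p-2)` (also at `t = 0`), so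
`φ ∘ u` is `C¹` and integration by parts, with no boundary terms thanks to the compact support,
turns `∫ Δu · φ(u)` into `-∫ φ'(u) |∇u|²`, while `φ(u)² = |u|^(2p-2)`.
-/

open MeasureTheory

/-- The Laplacian `Δu(x) = ∑ i, ∂²u/∂x_i²(x)` as the sum of second partial derivatives. -/
noncomputable def lap {d : ℕ} (u : EuclideanSpace ℝ (Fin d) → ℝ)
    (x : EuclideanSpace ℝ (Fin d)) : ℝ :=
  ∑ i : Fin d, fderiv ℝ (fun y => fderiv ℝ u y (EuclideanSpace.single i (1 : ℝ))) x
    (EuclideanSpace.single i (1 : ℝ))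

section SignedPower

variable {q : ℝ}

theorem hasDerivAt_abs_rpow_mul_self_of_pos {s : ℝ} (hs : 0 < s) :
    HasDerivAt (fun t : ℝ => |t| ^ q * t) ((q + 1) * |s| ^ q) s := by
  have hpow : HasDerivAt (fun t : ℝ => t ^ (q + 1)) ((q + 1) * |s| ^ q) s := by
    simpa [abs_of_pos hs] using Real.hasDerivAt_rpow_const (p := q + 1) (Or.inl hs.ne')
  refine hpow.congr_of_eventuallyEq ?_
  filter_upwards [lt_mem_nhds hs] with t ht
  rw [abs_of_pos ht, Real.rpow_add_one ht.ne']

theorem hasDerivAt_abs_rpow_mul_self_zero (hq : 0 ≤ q) :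
    HasDerivAt (fun t : ℝ => |t| ^ q * t) ((q + 1) * |0| ^ q) 0 := by
  have hval : (q + 1) * |(0 : ℝ)| ^ q = |(0 : ℝ)| ^ q := by
    rcases eq_or_ne q 0 with rfl | hq0
    · simp
    · simp [Real.zero_rpow hq0]
  rw [hval, hasDerivAt_iff_tendsto_slope]
  have hcont : Continuous (fun t : ℝ => |t| ^ q) := continuous_abs.rpow_const fun _ => Or.inr hq
  refine (hcont.tendsto 0).mono_left nhdsWithin_le_nhds |>.congr' ?_
  filter_upwards [self_mem_nhdsWithin] with t (ht : t ≠ 0)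
  simp [slope_def_field, ht]

theorem hasDerivAt_abs_rpow_mul_self (hq : 0 ≤ q) (s : ℝ) :
    HasDerivAt (fun t : ℝ => |t| ^ q * t) ((q + 1) * |s| ^ q) s := by
  rcases lt_trichotomy s 0 with hs | rfl | hs
  · have hodd := ((hasDerivAt_abs_rpow_mul_self_of_pos (q := q) (neg_pos.2 hs)).comp s
      (hasDerivAt_neg s)).neg
    exact (hodd.congr_deriv (by simp)).congr_of_eventuallyEq (.of_forall fun t => by simp)
  · exact hasDerivAt_abs_rpow_mul_self_zero hq
  · exact hasDerivAt_abs_rpow_mul_self_of_pos hs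

theorem contDiff_abs_rpow_mul_self (hq : 0 ≤ q) : ContDiff ℝ 1 (fun t : ℝ => |t| ^ q * t) := by
  have hderiv : deriv (fun t : ℝ => |t| ^ q * t) = fun s => (q + 1) * |s| ^ q :=
    funext fun s => (hasDerivAt_abs_rpow_mul_self hq s).deriv
  rw [contDiff_one_iff_deriv, hderiv]
  exact ⟨fun s => (hasDerivAt_abs_rpow_mul_self hq s).differentiableAt,
    continuous_const.mul (continuous_abs.rpow_const fun _ => Or.inr hq)⟩

theorem abs_rpow_mul_self_sq (hq : q ≠ -1) (s : ℝ) :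
    (|s| ^ q * s) ^ 2 = |s| ^ (2 * q + 2) := by
  rw [Real.rpow_add' (abs_nonneg s) (by contrapose! hq; linarith), mul_comm 2 q,
    Real.rpow_mul (abs_nonneg s)]
  norm_cast
  rw [mul_pow, sq_abs]

end SignedPower

theorem integral_neg_add_sq {X : Type*} [TopologicalSpace X] [MeasurableSpace X]
    [OpensMeasurableSpace X] {μ : Measure X} [IsFiniteMeasureOnCompacts μ] {f g : X → ℝ}
    (hf : Continuous f) (hg : Continuous g) (hfs : HasCompactSupport f)
    (hgs : HasCompactSupport g) :
    ∫ x, (-f x + g x) ^ 2 ∂μ = ∫ x, f x ^ 2 ∂μ + ∫ x, g x ^ 2 ∂μ - 2 * ∫ x, f x * g x ∂μ := by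
  have hf2 : Integrable (fun x => f x ^ 2) μ := by
    have := hfs.comp_left (g := fun t : ℝ => t ^ 2) (by simp)
    exact (hf.pow 2).integrable_of_hasCompactSupport this
  have hg2 : Integrable (fun x => g x ^ 2) μ := by
    have := hgs.comp_left (g := fun t : ℝ => t ^ 2) (by simp)
    exact (hg.pow 2).integrable_of_hasCompactSupport this
  have hfg : Integrable (fun x => f x * g x) μ :=
    (hf.mul hg).integrable_of_hasCompactSupport hfs.mul_right
  calc ∫ x, (-f x + g x) ^ 2 ∂μ = ∫ x, (f x ^ 2 + g x ^ 2) - 2 * (f x * g x) ∂μ :=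
        integral_congr_ae (.of_forall fun x => by ring)
    _ = _ := by
      have hsum : Integrable (fun x => f x ^ 2 + g x ^ 2) μ := hf2.add hg2
      rw [integral_sub hsum (hfg.const_mul 2), integral_add hf2 hg2, integral_const_mul]

section IntegrationByParts

variable {E : Type*} [NormedAddCommGroup E] [NormedSpace ℝ E] [FiniteDimensional ℝ E]
  [MeasurableSpace E] [BorelSpace E] {μ : Measure E} [μ.IsAddHaarMeasure]

theorem integral_fderiv_mul_eq_neg_mul_fderiv_of_hasCompactSupport {f g : E → ℝ}
    (hf : ContDiff ℝ 1 f) (hg : ContDiff ℝ 1 g) (hfs : HasCompactSupport f) (v : E) :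
    ∫ x, fderiv ℝ f x v * g x ∂μ = -∫ x, f x * fderiv ℝ g x v ∂μ := by
  have hf' : Continuous fun x => fderiv ℝ f x v :=
    (hf.continuous_fderiv one_ne_zero).clm_apply continuous_const
  have hg' : Continuous fun x => fderiv ℝ g x v :=
    (hg.continuous_fderiv one_ne_zero).clm_apply continuous_const
  rw [integral_mul_fderiv_eq_neg_fderiv_mul_of_integrable, neg_neg]
  · exact (hf'.mul hg.continuous).integrable_of_hasCompactSupport (hfs.fderiv_apply ℝ v).mul_right
  · exact (hf.continuous.mul hg').integrable_of_hasCompactSupport hfs.mul_right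
  · exact (hf.continuous.mul hg.continuous).integrable_of_hasCompactSupport hfs.mul_right
  · exact fun x _ => (hf.differentiable one_ne_zero).differentiableAt
  · exact fun x _ => (hg.differentiable one_ne_zero).differentiableAt

end IntegrationByParts

section Gradient

variable {F : Type*} [NormedAddCommGroup F] [InnerProductSpace ℝ F] [CompleteSpace F]

theorem sum_fderiv_mul_eq_apply_gradient {ι : Type*} [Fintype ι] (b : OrthonormalBasis ι ℝ F)
    (u : F → ℝ) (x : F) (L : F →L[ℝ] ℝ) :
    ∑ i, fderiv ℝ u x (b i) * L (b i) = L (gradient u x) := by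
  conv_rhs => rw [← b.sum_repr' (gradient u x)]
  simp [← inner_gradient_left]

theorem fderiv_comp_apply_gradient {φ φ' : ℝ → ℝ} (hφ : ∀ s, HasDerivAt φ (φ' s) s) {u : F → ℝ}
    {x : F} (hu : DifferentiableAt ℝ u x) :
    fderiv ℝ (fun y => φ (u y)) x (gradient u x) = φ' (u x) * ‖gradient u x‖ ^ 2 := by
  rw [show (fun y => φ (u y)) = φ ∘ u from rfl,
    ((hφ (u x)).comp_hasFDerivAt x hu.hasFDerivAt).fderiv]
  simp [← inner_gradient_left]

end Gradient

section Laplacian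

variable {d : ℕ} {u : EuclideanSpace ℝ (Fin d) → ℝ}

theorem contDiff_fderiv_apply_single (hu : ContDiff ℝ 2 u) (i : Fin d) :
    ContDiff ℝ 1 fun x => fderiv ℝ u x (EuclideanSpace.single i 1) :=
  (hu.fderiv_right (m := 1) le_rfl).clm_apply contDiff_const

theorem continuous_lap (hu : ContDiff ℝ 2 u) : Continuous (lap u) :=
  continuous_finsetSum _ fun i _ =>
    ((contDiff_fderiv_apply_single hu i).continuous_fderiv one_ne_zero).clm_apply continuous_const

theorem hasCompactSupport_lap (hus : HasCompactSupport u) : HasCompactSupport (lap u) := by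
  have hsum : lap u = ∑ i, fun x => fderiv ℝ (fun y => fderiv ℝ u y (EuclideanSpace.single i 1)) x
      (EuclideanSpace.single i 1) := by
    ext x; simp [lap, Finset.sum_apply]
  rw [hsum]
  exact Finset.sum_induction _ HasCompactSupport (fun _ _ => .add) .zero fun i _ =>
    (hus.fderiv_apply ℝ _).fderiv_apply ℝ _

theorem integral_lap_mul_eq_neg_integral_fderiv_apply_gradient {F : EuclideanSpace ℝ (Fin d) → ℝ}
    (hu : ContDiff ℝ 2 u) (hus : HasCompactSupport u) (hF : ContDiff ℝ 1 F) :
    ∫ x, lap u x * F x = -∫ x, fderiv ℝ F x (gradient u x) := by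
  set e : Fin d → EuclideanSpace ℝ (Fin d) := fun i => EuclideanSpace.single i 1
  set du : Fin d → EuclideanSpace ℝ (Fin d) → ℝ := fun i x => fderiv ℝ u x (e i)
  have hdu i : ContDiff ℝ 1 (du i) := contDiff_fderiv_apply_single hu i
  have hdus i : HasCompactSupport (du i) := hus.fderiv_apply ℝ (e i)
  have hF' i : Continuous fun x => fderiv ℝ F x (e i) :=
    (hF.continuous_fderiv one_ne_zero).clm_apply continuous_const
  calc ∫ x, lap u x * F x = ∑ i, ∫ x, fderiv ℝ (du i) x (e i) * F x := by
        simp only [lap, Finset.sum_mul]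
        refine integral_finsetSum _ fun i _ => ?_
        exact (((hdu i).continuous_fderiv one_ne_zero).clm_apply continuous_const |>.mul
          hF.continuous).integrable_of_hasCompactSupport ((hdus i).fderiv_apply ℝ (e i)).mul_right
    _ = ∑ i, -∫ x, du i x * fderiv ℝ F x (e i) := by
        simp only [integral_fderiv_mul_eq_neg_mul_fderiv_of_hasCompactSupport (hdu _) hF (hdus _)]
    _ = -∫ x, ∑ i, du i x * fderiv ℝ F x (e i) := by
        rw [Finset.sum_neg_distrib, ← integral_finsetSum]
        exact fun i _ =>
          ((hdu i).continuous.mul (hF' i)).integrable_of_hasCompactSupport (hdus i).mul_right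
    _ = -∫ x, fderiv ℝ F x (gradient u x) := by
        simp only [du, e, ← EuclideanSpace.basisFun_apply,
          sum_fderiv_mul_eq_apply_gradient (EuclideanSpace.basisFun (Fin d) ℝ)]

end Laplacian

theorem energy_gradient_L2_expansion_general (p : ℝ) (hp : 2 ≤ p)
    (d : ℕ) (u : EuclideanSpace ℝ (Fin d) → ℝ)
    (hu : ContDiff ℝ 2 u) (hsupp : HasCompactSupport u) :
    ∫ x, (-lap u x + |u x| ^ (p - 2) * u x) ^ 2 =
      (∫ x, (lap u x) ^ 2) + (∫ x, |u x| ^ (2 * p - 2)) +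
        2 * (p - 1) * ∫ x, |u x| ^ (p - 2) * ‖gradient u x‖ ^ 2 := by
  have hq : 0 ≤ p - 2 := by linarith
  have hF : ContDiff ℝ 1 fun x => |u x| ^ (p - 2) * u x :=
    (contDiff_abs_rpow_mul_self hq).comp (hu.of_le one_le_two)
  have hFs : HasCompactSupport fun x => |u x| ^ (p - 2) * u x :=
    hsupp.comp_left (g := fun t => |t| ^ (p - 2) * t) (by simp)
  have hsq x : (|u x| ^ (p - 2) * u x) ^ 2 = |u x| ^ (2 * p - 2) := by
    rw [abs_rpow_mul_self_sq (by linarith), show 2 * (p - 2) + 2 = 2 * p - 2 by ring]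
  have hcross : ∫ x, lap u x * (|u x| ^ (p - 2) * u x) =
      -((p - 1) * ∫ x, |u x| ^ (p - 2) * ‖gradient u x‖ ^ 2) := by
    rw [integral_lap_mul_eq_neg_integral_fderiv_apply_gradient hu hsupp hF, ← integral_const_mul]
    congr 2 with x
    rw [fderiv_comp_apply_gradient (hasDerivAt_abs_rpow_mul_self hq)
      ((hu.differentiable two_ne_zero) x)]
    ring
  rw [integral_neg_add_sq (continuous_lap hu) hF.continuous (hasCompactSupport_lap hsupp) hFs,
    hcross]
  simp only [hsq]
  ring

/-- For `p ≥ 2`, `d ≥ 1` and `u : ℝ^d → ℝ` twice continuously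
differentiable with compact support,
`∫ (−Δu + |u|^{p-2}u)² dx = ∫ (Δu)² dx + ∫ |u|^{2p-2} dx + 2(p−1) ∫ |u|^{p-2} |∇u|² dx`. -/
theorem energy_gradient_L2_expansion (p : ℝ) (hp : 2 ≤ p)
    (d : ℕ) (hd : 1 ≤ d) (u : EuclideanSpace ℝ (Fin d) → ℝ)
    (hu : ContDiff ℝ 2 u) (hsupp : HasCompactSupport u) :
    ∫ x, (-lap u x + |u x| ^ (p - 2) * u x) ^ 2 =
      (∫ x, (lap u x) ^ 2) + (∫ x, |u x| ^ (2 * p - 2)) +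
        2 * (p - 1) * ∫ x, |u x| ^ (p - 2) * ‖gradient u x‖ ^ 2 :=
  energy_gradient_L2_expansion_general p hp d u hu hsupp
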